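/- arXiv:0904.4739 — 2 statements merged into one kernel-verified Lean document; each statement's English description precedes it below -/
import Mathlib

section
/- Let (X,x) be a pointed topological space and let [f] ∈ π₁^top(X,x). Then left translation L_[f] : π₁^top(X,x) → π₁^top(X,x), [g] ↦ [f]·[g], is a homeomorphism of π₁^top(X,x). -/
attribute [local instance] Path.Homotopic.setoid

/-- The topological fundamental group: homotopy classes of loops at `x` with the
quotient topology induced from the compact-open topology on the loop space. -/
instance piTopTopology {X : Type*} [TopologicalSpace X] (x y : X) :
    TopologicalSpace (Path.Homotopic.Quotient x y) :=
  inferInstanceAs (TopologicalSpace (Quotient (Path.Homotopic.setoid x y)))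

/-
Concatenation with a fixed path is continuous on the path space, so it descends to a continuous
map on homotopy classes; precomposing with the class of the reversed path inverts it.
-/

namespace Path.Homotopic.Quotient

variable {X : Type*} [TopologicalSpace X] {x y z : X}

theorem continuous_trans_left (f : Path.Homotopic.Quotient x y) :
    Continuous (fun g : Path.Homotopic.Quotient y z => f.trans g) := by
  induction f with | mk p =>
  refine isQuotientMap_quotient_mk'.continuous_iff.mpr ?_
  exact continuous_quotient_mk'.comp (continuous_const.path_trans continuous_id)

noncomputable def transLeftHomeomorph (f : Path.Homotopic.Quotient x y) :
    Path.Homotopic.Quotient y z ≃ₜ Path.Homotopic.Quotient x z where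
  toFun g := f.trans g
  invFun g := f.symm.trans g
  left_inv g := by simp only [← trans_assoc, symm_trans, refl_trans]
  right_inv g := by simp only [← trans_assoc, trans_symm, refl_trans]
  continuous_toFun := continuous_trans_left f
  continuous_invFun := continuous_trans_left f.symm

end Path.Homotopic.Quotient

theorem left_translation_isHomeomorph
    {X : Type*} [TopologicalSpace X] (x : X) (f : Path.Homotopic.Quotient x x) :
    IsHomeomorph (fun g : Path.Homotopic.Quotient x x => f.trans g) :=
  (Path.Homotopic.Quotient.transLeftHomeomorph f).isHomeomorph
end

section
/- Let X be a locally path connected and semilocally simply-connected topological space and let x ∈ X. Then the multiplication map μ : π₁^top(X,x) × π₁^top(X,x) → π₁^top(X,x), ([f],[g]) ↦ [f]·[g], is continuous, where the domain carries the product topology. -/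
attribute [local instance] Path.Homotopic.setoid

/-- `X` is semilocally simply-connected: every point has an open neighborhood `U`
such that the inclusion-induced homomorphism `π₁(U,x) → π₁(X,x)` is trivial. -/
def SemilocallySimplyConnected (X : Type*) [TopologicalSpace X] : Prop :=
  ∀ x : X, ∃ (U : Set X) (_ : IsOpen U) (hx : x ∈ U),
    ∀ γ : Path (⟨x, hx⟩ : U) (⟨x, hx⟩ : U),
      (γ.map continuous_subtype_val).Homotopic (Path.refl x)

/-!
`π₁(X, x)` is discrete, so multiplication, like any map out of the discrete space
`π₁(X, x) × π₁(X, x)`, is continuous.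

For discreteness, every point has an open neighbourhood `V` (the path component of a neighbourhood
given by semilocal simple connectivity, open by local path connectedness) in which any two paths
with common endpoints are homotopic in `X`. Subdivide `[0, 1]` so that a path `f` maps the `k`-th
piece into such a set `W k`. The paths `g` that map each piece into `W k` and whose value at each
subdivision point `t k` lies in the path component of `W (k - 1) ∩ W k` containing `f (t k)` form a
compact-open neighbourhood of `f`. Joining `g (t k)` to `f (t k)` inside `W (k - 1) ∩ W k` cuts the
comparison of `g` with `f` into squares, each filled in by a homotopy in `W k`, so `g ≃ f`.
-/

open Set unitInterval Topology Filter

section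

variable {X : Type*} [TopologicalSpace X]

def IsRelSimplyConnected (V : Set X) : Prop :=
  ∀ ⦃a b : X⦄ (p q : Path a b), range p ⊆ V → range q ⊆ V → p.Homotopic q

section
open Path.Homotopic.Quotient

lemma isRelSimplyConnected_of_loops {V : Set X}
    (hV : ∀ ⦃a : X⦄ (γ : Path a a), range γ ⊆ V → γ.Homotopic (Path.refl a)) :
    IsRelSimplyConnected V := by
  intro a b p q hp hq
  have hloop := hV (p.trans q.symm) <| by
    rw [Path.trans_range, Path.symm_range]; exact union_subset hp hq
  rw [← Path.Homotopic.Quotient.eq, mk_trans, mk_symm, mk_refl] at hloop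
  rw [← Path.Homotopic.Quotient.eq]
  calc mk p = ((mk p).trans (mk q).symm).trans (mk q) := by
        rw [trans_assoc, symm_trans, trans_refl]
    _ = mk q := by rw [hloop, refl_trans]

lemma isRelSimplyConnected_pathComponentIn {U : Set X} {y : X} (hy : y ∈ U)
    (hU : ∀ γ : Path (⟨y, hy⟩ : U) ⟨y, hy⟩,
      (γ.map continuous_subtype_val).Homotopic (Path.refl y)) :
    IsRelSimplyConnected (pathComponentIn U y) := by
  refine isRelSimplyConnected_of_loops fun a γ hγ ↦ ?_
  obtain ⟨p, hp⟩ : JoinedIn U y a := hγ ⟨0, γ.source⟩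
  set L := p.trans (γ.trans p.symm)
  have hLU : ∀ t, L t ∈ U := by
    rw [← range_subset_iff, Path.trans_range, Path.trans_range, Path.symm_range]
    exact union_subset (range_subset_iff.2 hp)
      (union_subset (hγ.trans pathComponentIn_subset) (range_subset_iff.2 hp))
  have hL : L.Homotopic (Path.refl y) :=
    hU ⟨⟨fun t ↦ ⟨L t, hLU t⟩, by fun_prop⟩, by simp, by simp⟩
  rw [← Path.Homotopic.Quotient.eq, mk_trans, mk_trans, mk_symm, mk_refl] at hL
  rw [← Path.Homotopic.Quotient.eq, mk_refl]
  calc mk γ = (mk p).symm.trans (((mk p).trans ((mk γ).trans (mk p).symm)).trans (mk p)) := by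
        simp only [trans_assoc, symm_trans, trans_refl]
        rw [← trans_assoc, symm_trans, refl_trans]
    _ = refl a := by rw [hL, refl_trans, symm_trans]

end

lemma SemilocallySimplyConnected.exists_isOpen_isRelSimplyConnected [LocallyPathConnectedSpace X]
    (hX : SemilocallySimplyConnected X) (y : X) :
    ∃ V : Set X, IsOpen V ∧ y ∈ V ∧ IsRelSimplyConnected V := by
  obtain ⟨U, hUo, hy, hU⟩ := hX y
  exact ⟨_, hUo.pathComponentIn y, mem_pathComponentIn_self hy,
    isRelSimplyConnected_pathComponentIn hy hU⟩

namespace Path.Homotopic.Quotient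

lemma mk_subpath_trans_mk_subpath {a b : X} (γ : Path a b) (t₀ t₁ t₂ : I) :
    (mk (γ.subpath t₀ t₁)).trans (mk (γ.subpath t₁ t₂)) = mk (γ.subpath t₀ t₂) := by
  rw [← mk_trans, eq]
  exact ⟨Homotopy.subpathTransSubpath γ t₀ t₁ t₂⟩

theorem mk_subpath_trans_eq_of_squares {a b c d : X} (γ : Path a b) (δ : Path c d) (t : ℕ → I)
    (h : ∀ k, Path (γ (t k)) (δ (t k))) (n : ℕ)
    (hsq : ∀ k < n, (mk (γ.subpath (t k) (t (k + 1)))).trans (mk (h (k + 1))) =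
      (mk (h k)).trans (mk (δ.subpath (t k) (t (k + 1))))) :
    (mk (γ.subpath (t 0) (t n))).trans (mk (h n)) =
      (mk (h 0)).trans (mk (δ.subpath (t 0) (t n))) := by
  induction n with
  | zero => simp [mk_refl]
  | succ n ih =>
    rw [← mk_subpath_trans_mk_subpath γ _ (t n), ← mk_subpath_trans_mk_subpath δ _ (t n),
      trans_assoc, hsq n n.lt_succ_self, ← trans_assoc,
      ih fun k hk ↦ hsq k (hk.trans n.lt_succ_self), trans_assoc]

theorem homotopic_of_mk_subpath_trans_eq {a b : X} {γ δ : Path a b} {s₀ s₁ : I}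
    (hs₀ : s₀ = 0) (hs₁ : s₁ = 1) {h₀ : Path (γ s₀) (δ s₀)} {h₁ : Path (γ s₁) (δ s₁)}
    (hh₀ : ∀ u, h₀ u = a) (hh₁ : ∀ u, h₁ u = b)
    (H : (mk (γ.subpath s₀ s₁)).trans (mk h₁) = (mk h₀).trans (mk (δ.subpath s₀ s₁))) :
    γ.Homotopic δ := by
  subst hs₀ hs₁
  rw [← mk_trans, ← mk_trans, eq] at H
  have hγ : ((γ.subpath 0 1).trans h₁).cast γ.source.symm δ.target.symm =
      γ.trans (Path.refl b) := by
    ext u; simp [Path.trans_apply, hh₁]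
  have hδ : (h₀.trans (δ.subpath 0 1)).cast γ.source.symm δ.target.symm =
      (Path.refl a).trans δ := by
    ext u; simp [Path.trans_apply, hh₀]
  have := H.pathCast γ.source.symm δ.target.symm
  rw [hγ, hδ] at this
  exact ((Path.Homotopic.trans_refl γ).symm.trans this).trans (Path.Homotopic.refl_trans δ)

end Path.Homotopic.Quotient

theorem Path.Homotopic.of_subdivision {a b : X} {γ δ : Path a b} {t : ℕ → I} {n : ℕ}
    (ht : Monotone t) (ht₀ : t 0 = 0) (htn : t n = 1) {W : ℕ → Set X}
    (hW : ∀ k, IsRelSimplyConnected (W k))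
    (hγ : ∀ k < n, MapsTo γ (Icc (t k) (t (k + 1))) (W k))
    (hδ : ∀ k < n, MapsTo δ (Icc (t k) (t (k + 1))) (W k))
    (h : ∀ k, Path (γ (t k)) (δ (t k))) (hhW : ∀ k ≤ n, range (h k) ⊆ W (k - 1) ∩ W k)
    (hh₀ : ∀ u, h 0 u = a) (hhn : ∀ u, h n u = b) :
    γ.Homotopic δ := by
  refine Path.Homotopic.Quotient.homotopic_of_mk_subpath_trans_eq ht₀ htn hh₀ hhn
    (Path.Homotopic.Quotient.mk_subpath_trans_eq_of_squares γ δ t h n fun k hk ↦ ?_)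
  rw [← Path.Homotopic.Quotient.mk_trans, ← Path.Homotopic.Quotient.mk_trans,
    Path.Homotopic.Quotient.eq]
  refine hW k _ _ ?_ ?_ <;> rw [Path.trans_range, Path.range_subpath_of_le _ _ _ (ht k.le_succ)]
  · exact union_subset (hγ k hk).image_subset ((hhW (k + 1) hk).trans inter_subset_left)
  · exact union_subset ((hhW k hk.le).trans inter_subset_right) (hδ k hk).image_subset

theorem SemilocallySimplyConnected.eventually_homotopic [LocallyPathConnectedSpace X]
    (hX : SemilocallySimplyConnected X) {a b : X} (f : Path a b) :
    ∀ᶠ g in 𝓝 f, g.Homotopic f := by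
  choose V hVo hfV hV using fun s : I ↦ hX.exists_isOpen_isRelSimplyConnected (f s)
  obtain ⟨t, ht₀, ht, ⟨n, htn⟩, hcover⟩ := exists_monotone_Icc_subset_open_cover_unitInterval
    (fun s ↦ (hVo s).preimage f.continuous) (fun s _ ↦ mem_iUnion.2 ⟨s, hfV s⟩)
  choose i hi using hcover
  set W := fun k ↦ V (i k)
  have hfW : ∀ k, f (t k) ∈ W (k - 1) ∩ W k := by
    refine fun k ↦ ⟨?_, hi k ⟨le_rfl, ht k.le_succ⟩⟩
    rcases k with _ | k
    · exact hi 0 ⟨le_rfl, ht (Nat.zero_le 1)⟩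
    · exact hi k ⟨ht k.le_succ, le_rfl⟩
  have hnear : ∀ᶠ g : Path a b in 𝓝 f, ∀ k < n, MapsTo g (Icc (t k) (t (k + 1))) (W k) ∧
      g (t k) ∈ pathComponentIn (W (k - 1) ∩ W k) (f (t k)) := by
    refine (eventually_all_finite (finite_Iio n)).2 fun k _ ↦ .and ?_ ?_
    · exact (continuous_induced_dom.tendsto f).eventually
        (ContinuousMap.eventually_mapsTo isCompact_Icc (hVo _) (hi k))
    · exact ((continuous_eval_const (t k)).tendsto f).eventually_mem
        ((((hVo _).inter (hVo _)).pathComponentIn _).mem_nhds (mem_pathComponentIn_self (hfW k)))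
  filter_upwards [hnear] with g hg
  have hjoin : ∀ k, ∃ p : Path (g (t k)) (f (t k)),
      range p ⊆ W (k - 1) ∩ W k ∧ (k = 0 ∨ n ≤ k → ∀ u, p u = f (t k)) := by
    intro k
    by_cases hk : k = 0 ∨ n ≤ k
    · have hgf : g (t k) = f (t k) := by
        rcases hk with rfl | hk
        · simp [ht₀]
        · simp [htn k hk]
      exact ⟨(Path.refl _).cast hgf rfl, by simpa using hfW k, fun _ _ ↦ rfl⟩
    · obtain ⟨p, hp⟩ := (hg k (by omega)).2
      exact ⟨p.symm, by rw [Path.symm_range]; exact range_subset_iff.2 hp, by omega⟩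
  choose h hhW hhconst using hjoin
  exact Path.Homotopic.of_subdivision ht ht₀ (htn n le_rfl) (fun k ↦ hV (i k))
    (fun k hk ↦ (hg k hk).1) (fun k _ ↦ hi k) h (fun k _ ↦ hhW k)
    (fun u ↦ by simp [hhconst 0 (.inl rfl) u, ht₀])
    (fun u ↦ by simp [hhconst n (.inr le_rfl) u, htn])

theorem SemilocallySimplyConnected.isOpen_setOf_homotopic [LocallyPathConnectedSpace X]
    (hX : SemilocallySimplyConnected X) {a b : X} (f : Path a b) :
    IsOpen {g : Path a b | g.Homotopic f} :=
  isOpen_iff_eventually.2 fun _ hg ↦ (hX.eventually_homotopic _).mono fun _ h ↦ h.trans hg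

theorem SemilocallySimplyConnected.discreteTopology [LocallyPathConnectedSpace X]
    (hX : SemilocallySimplyConnected X) (a b : X) :
    DiscreteTopology (Path.Homotopic.Quotient a b) := by
  refine discreteTopology_iff_isOpen_singleton.2 fun q ↦ ?_
  induction q using Path.Homotopic.Quotient.ind with | mk f =>
  apply (isQuotientMap_quotient_mk' (s := Path.Homotopic.setoid a b)).isOpen_preimage.1
  convert hX.isOpen_setOf_homotopic f using 1
  ext g
  exact Path.Homotopic.Quotient.eq

end

theorem continuous_mul_topological_fundamental_group
    {X : Type*} [TopologicalSpace X] [LocallyPathConnectedSpace X]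
    (hX : SemilocallySimplyConnected X) (x : X) :
    Continuous (fun p : Path.Homotopic.Quotient x x × Path.Homotopic.Quotient x x =>
      p.1.trans p.2) := by
  have := hX.discreteTopology x x
  exact continuous_of_discreteTopology
end
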